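/- Let p ∈ (−1/2, 1) and let P ∈ Corr(ℂ⁴) be generated by unit vectors v₁, v₂, v₃, v₄ with ⟨v_a, v_b⟩ = p for all distinct a, b ∈ {1,2,3}, and v₄ = α₁(v₁ + v₃) + α₂v₂ for some nonzero complex scalars α₁, α₂. Then P is 2-decomposable; in fact, P = Q₁ ⊙ Q₂ for two correlation matrices Q₁, Q₂ each of rank at most 2. -/

import Mathlib

/-!
Realise `P` as the Gram matrix of tensors `w a ⊗ u a` with `w a, u a ∈ ℂ²`. Take
`u = (a₊, e₀, a₋, e₀)` with `a± = (cos θ, ±sin θ)`, `cos 2θ = p`, and `w = (b₊, b₋, b₊, w₃)` with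
`b± = (cos φ, ±sin φ)`, `cos 2φ = x := p / cos θ`; such `φ` exists because
`x² = 2p² / (1 + p) ≤ 1` exactly when `-1/2 ≤ p ≤ 1`. The first three tensors then have pairwise
inner products `p`, like `v₀, v₁, v₂`. Since `a₊ + a₋ = 2 cos θ • e₀`, the choice
`w₃ = 2 cos θ α₁ • b₊ + α₂ • b₋` makes the fourth tensor the same combination of the first three as
`v₃` is of `v₀, v₁, v₂`, so the two Gram matrices agree and `P = gram w ⊙ gram u`, a Schur product
of two Gram matrices of vectors in `ℂ²`.
-/

open scoped ComplexOrder ComplexInnerProductSpace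

/-- A correlation matrix: positive semidefinite with ones on the diagonal. -/
def IsCorrMat {n : ℕ} (P : Matrix (Fin n) (Fin n) ℂ) : Prop :=
  P.PosSemidef ∧ ∀ a, P a a = 1

/-- `P` is `r`-decomposable: a finite Schur (entrywise) product of correlation
matrices each of rank at most `r`. -/
def IsDecomposable {n : ℕ} (r : ℕ) (P : Matrix (Fin n) (Fin n) ℂ) : Prop :=
  ∃ m : ℕ, 0 < m ∧ ∃ R : Fin m → Matrix (Fin n) (Fin n) ℂ,
    (∀ i, IsCorrMat (R i) ∧ (R i).rank ≤ r) ∧ ∀ a b, P a b = ∏ i, R i a b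

open Matrix TensorProduct

section Gram

variable {𝕜 E F : Type*} [RCLike 𝕜] [NormedAddCommGroup E] [InnerProductSpace 𝕜 E]
  [NormedAddCommGroup F] [InnerProductSpace 𝕜 F]

theorem Matrix.rank_gram_le_finrank [FiniteDimensional 𝕜 E] {n : Type*} [Fintype n]
    (v : n → E) : (gram 𝕜 v).rank ≤ Module.finrank 𝕜 E := by
  rw [gram_eq_conjTranspose_mul (stdOrthonormalBasis 𝕜 E), rank_conjTranspose_mul_self]
  exact (rank_le_card_height _).trans_eq (by simp)

theorem Matrix.gram_tmul {n : Type*} (w : n → E) (u : n → F) :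
    gram 𝕜 (fun a ↦ w a ⊗ₜ[𝕜] u a) = gram 𝕜 w ⊙ gram 𝕜 u := by
  ext a b
  simp [gram_apply]

theorem Matrix.gram_eq_of_last_eq_sum {n : ℕ} {v : Fin (n + 1) → E} {w : Fin (n + 1) → F}
    (c : Fin n → 𝕜) (hv : v (Fin.last n) = ∑ i, c i • v i.castSucc)
    (hw : w (Fin.last n) = ∑ i, c i • w i.castSucc)
    (h : ∀ i j : Fin n,
      inner 𝕜 (v i.castSucc) (v j.castSucc) = inner 𝕜 (w i.castSucc) (w j.castSucc)) :
    gram 𝕜 v = gram 𝕜 w := by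
  ext a b
  induction a using Fin.lastCases <;> induction b using Fin.lastCases <;>
    simp [gram_apply, hv, hw, -inner_self_eq_norm_sq_to_K, inner_sum, sum_inner, inner_smul_left,
      inner_smul_right, h]

end Gram

theorem isCorrMat_gram {E : Type*} [NormedAddCommGroup E] [InnerProductSpace ℂ E] {n : ℕ}
    {v : Fin n → E} (hv : ∀ a, ‖v a‖ = 1) : IsCorrMat (gram ℂ v) :=
  ⟨posSemidef_gram ℂ v, fun a ↦ by simp [gram_apply, hv a]⟩

theorem IsDecomposable.hadamard {n r : ℕ} {Q₁ Q₂ : Matrix (Fin n) (Fin n) ℂ}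
    (h₁ : IsCorrMat Q₁) (hr₁ : Q₁.rank ≤ r) (h₂ : IsCorrMat Q₂) (hr₂ : Q₂.rank ≤ r) :
    IsDecomposable r (Q₁ ⊙ Q₂) :=
  ⟨2, two_pos, ![Q₁, Q₂], Fin.forall_fin_two.2 ⟨⟨h₁, hr₁⟩, ⟨h₂, hr₂⟩⟩,
    fun a b ↦ by simp [Fin.prod_univ_two]⟩

/-- The vector `(cos θ, σ sin θ)`, where `cos 2θ = r`. -/
noncomputable def halfAngleVec (r σ : ℝ) : EuclideanSpace ℂ (Fin 2) :=
  !₂[(√((1 + r) / 2) : ℂ), σ * √((1 - r) / 2)]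

section HalfAngleVec

variable {r : ℝ}

theorem inner_halfAngleVec (hr₁ : -1 ≤ r) (hr₂ : r ≤ 1) (σ τ : ℝ) :
    ⟪halfAngleVec r σ, halfAngleVec r τ⟫ = (1 + r) / 2 + σ * τ * ((1 - r) / 2) := by
  have h₁ : (√((1 + r) / 2) : ℂ) * √((1 + r) / 2) = (1 + r) / 2 := by
    exact_mod_cast Real.mul_self_sqrt (by linarith)
  have h₂ : (√((1 - r) / 2) : ℂ) * √((1 - r) / 2) = (1 - r) / 2 := by
    exact_mod_cast Real.mul_self_sqrt (by linarith)
  unfold halfAngleVec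
  generalize √((1 + r) / 2) = a at *
  generalize √((1 - r) / 2) = b at *
  simp [EuclideanSpace.inner_eq_star_dotProduct, dotProduct, Fin.sum_univ_two]
  linear_combination h₁ + σ * τ * h₂

theorem norm_halfAngleVec (hr₁ : -1 ≤ r) (hr₂ : r ≤ 1) {σ : ℝ} (hσ : σ ^ 2 = 1) :
    ‖halfAngleVec r σ‖ = 1 := by
  have hσ' : (σ : ℂ) ^ 2 = 1 := by exact_mod_cast hσ
  have h := inner_halfAngleVec hr₁ hr₂ σ σ
  rw [inner_self_eq_norm_sq_to_K] at h
  rw [← pow_eq_one_iff_of_nonneg (norm_nonneg _) two_ne_zero, ← Complex.ofReal_inj]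
  push_cast
  linear_combination h + (1 - r) / 2 * hσ'

theorem inner_halfAngleVec_one_neg_one (hr₁ : -1 ≤ r) (hr₂ : r ≤ 1) :
    ⟪halfAngleVec r 1, halfAngleVec r (-1)⟫ = r := by
  rw [inner_halfAngleVec hr₁ hr₂]; push_cast; ring

theorem inner_halfAngleVec_neg_one_one (hr₁ : -1 ≤ r) (hr₂ : r ≤ 1) :
    ⟪halfAngleVec r (-1), halfAngleVec r 1⟫ = r := by
  rw [inner_halfAngleVec hr₁ hr₂]; push_cast; ring

theorem inner_single_zero_halfAngleVec (σ : ℝ) :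
    ⟪EuclideanSpace.single 0 1, halfAngleVec r σ⟫ = √((1 + r) / 2) := by
  simp [halfAngleVec, EuclideanSpace.inner_eq_star_dotProduct, dotProduct]

theorem inner_halfAngleVec_single_zero (σ : ℝ) :
    ⟪halfAngleVec r σ, EuclideanSpace.single 0 1⟫ = √((1 + r) / 2) := by
  simp [halfAngleVec, EuclideanSpace.inner_eq_star_dotProduct, dotProduct]

theorem halfAngleVec_one_add_halfAngleVec_neg_one :
    halfAngleVec r 1 + halfAngleVec r (-1) =
      (2 * √((1 + r) / 2) : ℂ) • EuclideanSpace.single 0 1 := by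
  ext i; fin_cases i <;> simp [halfAngleVec]; ring

end HalfAngleVec

theorem abs_div_sqrt_le_one {p : ℝ} (hp₁ : -(1 / 2) ≤ p) (hp₂ : p ≤ 1) :
    |p / √((1 + p) / 2)| ≤ 1 := by
  have hy : 0 < √((1 + p) / 2) := Real.sqrt_pos.2 (by linarith)
  rw [abs_div, abs_of_pos hy, div_le_one hy]
  exact Real.abs_le_sqrt (by nlinarith)

theorem exists_gram_eq_gram_hadamard_gram {E : Type*} [NormedAddCommGroup E]
    [InnerProductSpace ℂ E] {p : ℝ} (hp₁ : -(1 / 2) < p) (hp₂ : p < 1) {v : Fin 4 → E}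
    (hgram : ∀ i j : Fin 3, ⟪v i.castSucc, v j.castSucc⟫ = if i = j then 1 else (p : ℂ))
    {α₁ α₂ : ℂ} (hv4 : v 3 = α₁ • (v 0 + v 2) + α₂ • v 1) :
    ∃ w u : Fin 4 → EuclideanSpace ℂ (Fin 2), (∀ a, ‖u a‖ = 1) ∧
      gram ℂ v = gram ℂ w ⊙ gram ℂ u := by
  obtain ⟨y, hy⟩ : ∃ y, √((1 + p) / 2) = y := ⟨_, rfl⟩
  set x := p / y with hx_def
  have hp : -1 ≤ p ∧ p ≤ 1 := ⟨by linarith, hp₂.le⟩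
  have hx : -1 ≤ x ∧ x ≤ 1 := by
    rw [hx_def, ← hy]; exact abs_le.1 (abs_div_sqrt_le_one hp₁.le hp₂.le)
  have hxy : (x : ℂ) * y = p := by
    exact_mod_cast div_mul_cancel₀ p (hy ▸ Real.sqrt_pos.2 (by linarith) : 0 < y).ne'
  let e₀ : EuclideanSpace ℂ (Fin 2) := EuclideanSpace.single 0 1
  let u : Fin 4 → EuclideanSpace ℂ (Fin 2) :=
    ![halfAngleVec p 1, e₀, halfAngleVec p (-1), e₀]
  let w : Fin 4 → EuclideanSpace ℂ (Fin 2) :=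
    ![halfAngleVec x 1, halfAngleVec x (-1), halfAngleVec x 1,
      (2 * y * α₁) • halfAngleVec x 1 + α₂ • halfAngleVec x (-1)]
  refine ⟨w, u, ?_, ?_⟩
  · intro a
    fin_cases a <;> simp [u, e₀, norm_halfAngleVec hp.1 hp.2]
  rw [← gram_tmul]
  refine gram_eq_of_last_eq_sum ![α₁, α₂, α₁] ?_ ?_ ?_
  · simp [Fin.sum_univ_three, hv4]
    module
  · simp [Fin.sum_univ_three, u, w, e₀]
    rw [add_right_comm, ← smul_add, ← tmul_add, halfAngleVec_one_add_halfAngleVec_neg_one, hy,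
      add_tmul, tmul_smul, ← smul_tmul', ← smul_tmul']
    module
  · intro i j
    rw [hgram]
    fin_cases i <;> fin_cases j <;>
      simp [u, w, e₀, norm_halfAngleVec hp.1 hp.2, norm_halfAngleVec hx.1 hx.2,
        inner_halfAngleVec_one_neg_one hp.1 hp.2, inner_halfAngleVec_one_neg_one hx.1 hx.2,
        inner_halfAngleVec_neg_one_one hp.1 hp.2, inner_halfAngleVec_neg_one_one hx.1 hx.2,
        inner_single_zero_halfAngleVec, inner_halfAngleVec_single_zero, hy, hxy, -Real.sqrt_div']

theorem stmt18_general (s : ℕ) (p : ℝ) (hp1 : -(1 / 2 : ℝ) < p) (hp2 : p < 1)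
    (v : Fin 4 → EuclideanSpace ℂ (Fin s)) (hv : ∀ a, ‖v a‖ = 1)
    (hgram : ∀ a b : Fin 4, a ≠ b → a ≠ 3 → b ≠ 3 → ⟪v a, v b⟫ = (p : ℂ))
    (α₁ α₂ : ℂ)
    (hv4 : v 3 = α₁ • (v 0 + v 2) + α₂ • v 1)
    (P : Matrix (Fin 4) (Fin 4) ℂ) (hP : ∀ a b, P a b = ⟪v a, v b⟫) :
    IsDecomposable 2 P ∧
    ∃ Q₁ Q₂ : Matrix (Fin 4) (Fin 4) ℂ, IsCorrMat Q₁ ∧ Q₁.rank ≤ 2 ∧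
      IsCorrMat Q₂ ∧ Q₂.rank ≤ 2 ∧ P = Matrix.hadamard Q₁ Q₂ := by
  have hgram₃ : ∀ i j : Fin 3, ⟪v i.castSucc, v j.castSucc⟫ = if i = j then 1 else (p : ℂ) := by
    intro i j
    split_ifs with hij
    · simp [hij, hv]
    · exact hgram _ _ (Fin.castSucc_injective _ |>.ne hij) (Fin.castSucc_ne_last i)
        (Fin.castSucc_ne_last j)
  obtain ⟨w, u, hu, hvwu⟩ := exists_gram_eq_gram_hadamard_gram hp1 hp2 hgram₃ hv4
  have hPwu : P = gram ℂ w ⊙ gram ℂ u := by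
    rw [← hvwu]; ext a b; exact hP a b
  have hQ₂ : IsCorrMat (gram ℂ u) := isCorrMat_gram hu
  have hQ₁ : IsCorrMat (gram ℂ w) := by
    refine ⟨posSemidef_gram ℂ w, fun a ↦ ?_⟩
    have h := congr_fun₂ hPwu a a
    rw [hadamard_apply, hQ₂.2 a, mul_one, hP] at h
    rw [← h, inner_self_eq_norm_sq_to_K, hv a]
    simp
  have hrank : ∀ z : Fin 4 → EuclideanSpace ℂ (Fin 2), (gram ℂ z).rank ≤ 2 := fun z ↦
    (rank_gram_le_finrank z).trans_eq finrank_euclideanSpace_fin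
  exact ⟨hPwu ▸ IsDecomposable.hadamard hQ₁ (hrank w) hQ₂ (hrank u),
    _, _, hQ₁, hrank w, hQ₂, hrank u, hPwu⟩

/-- If `P ∈ Corr(ℂ⁴)` is generated by unit vectors with `⟪v_a, v_b⟫ = p` for distinct
`a, b ∈ {0,1,2}`, `-1/2 < p < 1`, and `v₃ = α₁ (v₀ + v₂) + α₂ v₁` with `α₁, α₂ ≠ 0`,
then `P` is 2-decomposable; in fact, `P` is the Schur product of two correlation
matrices of rank at most 2. -/
theorem stmt18 (s : ℕ) (p : ℝ) (hp1 : -(1 / 2 : ℝ) < p) (hp2 : p < 1)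
    (v : Fin 4 → EuclideanSpace ℂ (Fin s)) (hv : ∀ a, ‖v a‖ = 1)
    (hgram : ∀ a b : Fin 4, a ≠ b → a ≠ 3 → b ≠ 3 → ⟪v a, v b⟫ = (p : ℂ))
    (α₁ α₂ : ℂ) (hα₁ : α₁ ≠ 0) (hα₂ : α₂ ≠ 0)
    (hv4 : v 3 = α₁ • (v 0 + v 2) + α₂ • v 1)
    (P : Matrix (Fin 4) (Fin 4) ℂ) (hP : ∀ a b, P a b = ⟪v a, v b⟫) :
    IsDecomposable 2 P ∧
    ∃ Q₁ Q₂ : Matrix (Fin 4) (Fin 4) ℂ, IsCorrMat Q₁ ∧ Q₁.rank ≤ 2 ∧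
      IsCorrMat Q₂ ∧ Q₂.rank ≤ 2 ∧ P = Matrix.hadamard Q₁ Q₂ :=
  stmt18_general s p hp1 hp2 v hv hgram α₁ α₂ hv4 P hP
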